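/- Let $(X,T,\mu)$ be a linearly recurrent minimal Cantor system and let $m\in\mathbb{N}$. If $\alpha$ is rational with denominator dividing $\gcd(h_1(m),\dots,h_{C(m)}(m))$, then $\lambda=\exp(2i\pi\alpha)$ is a continuous eigenvalue of $(X,T)$. -/

import Mathlib

open MeasureTheory Filter Topology

/-- A nested sequence of clopen Kakutani–Rokhlin partitions of `(X,T)`,
satisfying (KR1)-(KR6) and the linear recurrence condition (LR) with constant `L`.
The pieces of the `n`-th partition are the sets `T^{-j}(base n k)` for
`k : Fin (C n)` and `j < hgt n k`. -/
structure LRCantor (X : Type*) [TopologicalSpace X] (T : X ≃ₜ X) (L : ℕ) : Type _ where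
  C : ℕ → ℕ
  hgt : (n : ℕ) → Fin (C n) → ℕ
  base : (n : ℕ) → Fin (C n) → Set X
  C_pos : ∀ n, 0 < C n
  hgt_pos : ∀ n k, 0 < hgt n k
  clopen : ∀ n k, IsClopen (base n k)
  C_zero : C 0 = 1
  hgt_zero : ∀ k, hgt 0 k = 1
  base_zero : ∀ k, base 0 k = Set.univ
  pieces_disjoint : ∀ n (k k' : Fin (C n)) (j j' : ℕ), j < hgt n k → j' < hgt n k' →
    (k, j) ≠ (k', j') → Disjoint ((⇑T)^[j] ⁻¹' base n k) ((⇑T)^[j'] ⁻¹' base n k')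
  pieces_cover : ∀ n (x : X), ∃ (k : Fin (C n)) (j : ℕ), j < hgt n k ∧ (⇑T)^[j] x ∈ base n k
  KR1 : ∀ n, (⋃ k, base (n+1) k) ⊆ ⋃ k, base n k
  KR2 : ∀ n (k : Fin (C (n+1))) (j : ℕ), j < hgt (n+1) k →
    ∃ (k' : Fin (C n)) (j' : ℕ), j' < hgt n k' ∧
      (⇑T)^[j] ⁻¹' base (n+1) k ⊆ (⇑T)^[j'] ⁻¹' base n k'
  KR3 : ∃ x : X, (⋂ n, ⋃ k, base n k) = {x}
  KR4 : ∀ (U : Set X) (x : X), IsOpen U → x ∈ U →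
    ∃ (n : ℕ) (k : Fin (C n)) (j : ℕ), j < hgt n k ∧ x ∈ (⇑T)^[j] ⁻¹' base n k ∧
      (⇑T)^[j] ⁻¹' base n k ⊆ U
  KR5 : ∀ n (l : Fin (C (n+1))) (k : Fin (C n)),
    ∃ j, j < hgt (n+1) l ∧ (⇑T)^[j] ⁻¹' base (n+1) l ⊆ base n k
  KR6 : ∀ n, (⋃ k, base (n+1) k) ⊆ base n ⟨0, C_pos n⟩
  LR : ∀ n (l : Fin (C (n+1))) (k : Fin (C n)), hgt (n+1) l ≤ L * hgt n k

namespace LRCantor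

variable {X : Type*} [TopologicalSpace X] {T : X ≃ₜ X} {L : ℕ}

/-- The incidence numbers `m_{l,k}(n+1)` of the sequence of partitions. -/
noncomputable def m (S : LRCantor X T L) (n : ℕ) (l : Fin (S.C (n+1))) (k : Fin (S.C n)) : ℕ :=
  Set.ncard {j : ℕ | j < S.hgt (n+1) l ∧ (⇑T)^[j] ⁻¹' S.base (n+1) l ⊆ S.base n k}

end LRCantor

/-- `lam` is a continuous eigenvalue of `(X,T)`. -/
def IsContinuousEigenvalue {X : Type*} [TopologicalSpace X] (T : X ≃ₜ X) (lam : ℂ) : Prop :=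
  ∃ f : X → ℂ, Continuous f ∧ f ≠ 0 ∧ ∀ x, f (T x) = lam * f x

/-- `lam` is a measure-theoretical eigenvalue of `(X,T,μ)`. -/
def IsEigenvalue {X : Type*} [TopologicalSpace X] [MeasurableSpace X] (T : X ≃ₜ X)
    (μ : Measure X) (lam : ℂ) : Prop :=
  ∃ f : X → ℂ, MemLp f 2 μ ∧ ¬ (f =ᵐ[μ] 0) ∧
    (fun x => f (T x)) =ᵐ[μ] fun x => lam * f x

/-- `(X,T)` is a minimal homeomorphism: the only closed invariant subsets are `∅` and `X`. -/
def IsMinimal {X : Type*} [TopologicalSpace X] (T : X ≃ₜ X) : Prop :=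
  ∀ A : Set X, IsClosed A → (⇑T) '' A = A → A = ∅ ∨ A = Set.univ

variable {X : Type*} [TopologicalSpace X] [CompactSpace X] [TopologicalSpace.MetrizableSpace X]
  [TotallyDisconnectedSpace X] [PerfectSpace X] [Nonempty X]
variable [MeasurableSpace X] [BorelSpace X]

/-!
If `λ ^ h_k(m) = 1` for every tower `k` of the `m`-th Kakutani–Rokhlin partition, put
`f = λ ^ (-j)` on the clopen piece `T^{-j}(B_k(m))`; `f` is locally constant. `T` maps
`T^{-(j+1)}(B_k)` into `T^{-j}(B_k)`, multiplying `f` by `λ`, and maps `B_k` into a top piece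
`T^{-(h_{k'}-1)}(B_{k'})`, where `f = λ ^ (1 - h_{k'}) = λ`. If `α · gcd_k h_k(m) ∈ ℤ`, then
`λ = exp(2iπα)` satisfies `λ ^ h_k(m) = 1` for all `k`.
-/

namespace LRCantor

section Levels

variable {X : Type*} [TopologicalSpace X] {T : X ≃ₜ X} {L : ℕ} (S : LRCantor X T L) (n : ℕ)

theorem eq_of_iterate_mem_base {x : X} {k k' : Fin (S.C n)} {j j' : ℕ}
    (hj : j < S.hgt n k) (hj' : j' < S.hgt n k')
    (hx : (⇑T)^[j] x ∈ S.base n k) (hx' : (⇑T)^[j'] x ∈ S.base n k') : k = k' ∧ j = j' := by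
  by_contra hne
  exact Set.disjoint_left.mp
    (S.pieces_disjoint n k k' j j' hj hj' fun h => hne (Prod.ext_iff.mp h)) hx hx'

noncomputable def tower (x : X) : Fin (S.C n) := (S.pieces_cover n x).choose

noncomputable def level (x : X) : ℕ := (S.pieces_cover n x).choose_spec.choose

theorem level_lt_hgt (x : X) : S.level n x < S.hgt n (S.tower n x) :=
  (S.pieces_cover n x).choose_spec.choose_spec.1

theorem iterate_level_mem_base (x : X) : (⇑T)^[S.level n x] x ∈ S.base n (S.tower n x) :=
  (S.pieces_cover n x).choose_spec.choose_spec.2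

variable {S n}

theorem tower_eq_and_level_eq {x : X} {k : Fin (S.C n)} {j : ℕ} (hj : j < S.hgt n k)
    (hx : (⇑T)^[j] x ∈ S.base n k) : S.tower n x = k ∧ S.level n x = j :=
  S.eq_of_iterate_mem_base n (S.level_lt_hgt n x) hj (S.iterate_level_mem_base n x) hx

variable (S n)

theorem isLocallyConstant_level : IsLocallyConstant (S.level n) := by
  refine (IsLocallyConstant.iff_eventually_eq _).2 fun x => ?_
  have hpiece : IsOpen ((⇑T)^[S.level n x] ⁻¹' S.base n (S.tower n x)) :=
    ((S.clopen n _).preimage (T.continuous.iterate _)).isOpen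
  filter_upwards [hpiece.mem_nhds (S.iterate_level_mem_base n x)] with y hy
  exact (tower_eq_and_level_eq (S.level_lt_hgt n x) hy).2

variable {S n}

theorem level_apply_of_level_eq_succ {x : X} {i : ℕ} (hx : S.level n x = i + 1) :
    S.level n (T x) = i := by
  have hmem := S.iterate_level_mem_base n x
  rw [hx, Function.iterate_succ_apply] at hmem
  exact (tower_eq_and_level_eq (by have := S.level_lt_hgt n x; omega) hmem).2

theorem level_apply_add_one_of_level_eq_zero {x : X} (hx : S.level n x = 0) :
    S.level n (T x) + 1 = S.hgt n (S.tower n (T x)) := by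
  refine (Nat.succ_le_of_lt (S.level_lt_hgt n (T x))).antisymm (not_lt.1 fun hlt => ?_)
  have hmem : (⇑T)^[S.level n (T x) + 1] x ∈ S.base n (S.tower n (T x)) := by
    rw [Function.iterate_succ_apply]
    exact S.iterate_level_mem_base n (T x)
  have hbase : (⇑T)^[0] x ∈ S.base n (S.tower n x) := hx ▸ S.iterate_level_mem_base n x
  exact Nat.succ_ne_zero _
    (S.eq_of_iterate_mem_base n hlt (hx ▸ S.level_lt_hgt n x) hmem hbase).2

end Levels

theorem isContinuousEigenvalue_of_pow_hgt_eq_one {X : Type*} [TopologicalSpace X] [Nonempty X]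
    {T : X ≃ₜ X} {L : ℕ} (S : LRCantor X T L) (n : ℕ) {lam : ℂ}
    (hlam : ∀ k, lam ^ S.hgt n k = 1) : IsContinuousEigenvalue T lam := by
  have hlam0 : lam ≠ 0 := by
    rintro rfl
    simpa [(S.hgt_pos n ⟨0, S.C_pos n⟩).ne'] using hlam ⟨0, S.C_pos n⟩
  refine ⟨fun x => (lam ^ S.level n x)⁻¹,
    ((S.isLocallyConstant_level n).comp fun j => (lam ^ j)⁻¹).continuous,
    fun h => ?_, fun x => ?_⟩
  · obtain ⟨x⟩ := ‹Nonempty X›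
    exact inv_ne_zero (pow_ne_zero _ hlam0) (congrFun h x)
  · show (lam ^ S.level n (T x))⁻¹ = lam * (lam ^ S.level n x)⁻¹
    rcases hx : S.level n x with _ | i
    · have hwrap := congrArg (lam ^ ·) (level_apply_add_one_of_level_eq_zero hx)
      simp only [hlam, pow_succ] at hwrap
      rw [pow_zero, inv_one, mul_one, inv_eq_of_mul_eq_one_right hwrap]
    · rw [level_apply_of_level_eq_succ hx, pow_succ, mul_inv, mul_left_comm,
        mul_inv_cancel₀ hlam0, mul_one]

end LRCantor

theorem Complex.exp_two_pi_mul_I_mul_pow_eq_one {α : ℝ} {g : ℕ} {p : ℤ} (h : α * g = p) :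
    Complex.exp (2 * Real.pi * Complex.I * α) ^ g = 1 := by
  have h' : (α : ℂ) * g = p := by exact_mod_cast congrArg Complex.ofReal h
  rw [← Complex.exp_nat_mul, ← Complex.exp_int_mul_two_pi_mul_I p]
  congr 1
  linear_combination (2 * Real.pi * Complex.I) * h'

theorem isContinuousEigenvalue_of_rational_gcd_general
    (T : X ≃ₜ X) {L : ℕ} (S : LRCantor X T L)
    (m : ℕ) (α : ℝ)
    (hα : ∃ p : ℤ, α * (Finset.univ.gcd fun k : Fin (S.C m) => S.hgt m k) = (p : ℝ)) :
    IsContinuousEigenvalue T (Complex.exp (2 * Real.pi * Complex.I * α)) := by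
  obtain ⟨p, hp⟩ := hα
  refine S.isContinuousEigenvalue_of_pow_hgt_eq_one m fun k => ?_
  obtain ⟨c, hc⟩ : (Finset.univ.gcd fun k : Fin (S.C m) => S.hgt m k) ∣ S.hgt m k :=
    Finset.gcd_dvd (Finset.mem_univ k)
  rw [hc, pow_mul, Complex.exp_two_pi_mul_I_mul_pow_eq_one hp, one_pow]

/-- If `α` is rational with denominator dividing
`gcd(h_1(m),…,h_{C(m)}(m))` (equivalently `α·gcd(h_i(m)) ∈ ℤ`), then
`λ = e^{2iπα}` is a continuous eigenvalue of `(X,T)`. -/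
theorem isContinuousEigenvalue_of_rational_gcd
    (T : X ≃ₜ X) (hmin : IsMinimal T) {L : ℕ} (S : LRCantor X T L)
    (μ : Measure X) [IsProbabilityMeasure μ] (hinv : MeasurePreserving T μ μ)
    (m : ℕ) (α : ℝ)
    (hα : ∃ p : ℤ, α * (Finset.univ.gcd fun k : Fin (S.C m) => S.hgt m k) = (p : ℝ)) :
    IsContinuousEigenvalue T (Complex.exp (2 * Real.pi * Complex.I * α)) :=
  isContinuousEigenvalue_of_rational_gcd_general T S m α hα
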